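/- arXiv:2401.17782 — 4 statements merged into one kernel-verified Lean document; each statement's English description precedes it below -/
import Mathlib

section
/- Let Γ ⊆ ℝ^d be open, and let {Q_j}_{j∈J} be a finite or countably infinite family of open sets Q_j ⊆ ℝ^d such that 𝟙_Γ ≤ Σ_{j∈J} 𝟙_{Q_j} ≤ κ·𝟙_Γ holds Lebesgue-almost everywhere, with some κ ≥ 1. Suppose f : Γ → ℂ is smooth and satisfies ‖∂^α f‖_{L²(Γ)} ≤ D·B^α·(|α|!)^μ for all α ∈ ℕ^d, with some D > 0, B ∈ (0,∞)^d, and μ ∈ [0,1]. Then for every ε > 0 there is a subset J_gd ⊆ J of indices such that ‖f‖²_{L²(Γ)} ≤ Σ_{j∈J_gd} ‖f‖²_{L²(Q_j)} + ε·D², while for each j ∈ J_gd and every α ∈ ℕ^d one has ‖∂^α f‖_{L²(Q_j)} ≤ (2^d κ/ε)^{1/2}·(2B)^α·(|α|!)^μ·‖f‖_{L²(Q_j)}. -/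
/-!
Call `j` good when all the derivative bounds hold on `Q j` with the constants
`c_α = (2^d κ/ε)^{1/2} (2B)^α (|α|!)^μ`. For a bad `j` some `α` has
`‖∂^α f‖_{Q_j} > c_α ‖f‖_{Q_j}`, hence `‖f‖²_{Q_j} ≤ ∑_α c_α⁻² ‖∂^α f‖²_{Q_j}`.
Summing over the bad `j`, the overlap bound `∑_j ‖g‖²_{Q_j} ≤ κ ‖g‖²_Γ` and the hypothesis give
`∑_bad ‖f‖²_{Q_j} ≤ ε D² ∑_α 2^{-d} 4^{-|α|} = ε D² (2/3)^d`, while the covering bound gives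
`‖f‖²_Γ ≤ ∑_j ‖f‖²_{Q_j}`. Both covering bounds are inequalities between the measures
`𝟙_Γ λ ≤ ∑_j 𝟙_{Q_j} λ ≤ κ 𝟙_Γ λ`, and `‖g‖²_{L²}` is additive and homogeneous in the
measure.
-/

open MeasureTheory Real

noncomputable section

/-- `∂ᵢ f`, the partial derivative in coordinate direction `i`. -/
def coordDeriv {d : ℕ} (i : Fin d) (f : EuclideanSpace ℝ (Fin d) → ℂ) :
    EuclideanSpace ℝ (Fin d) → ℂ :=
  fun x => fderiv ℝ f x (EuclideanSpace.single i 1)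

/-- `∂^α f = ∂₁^{α 1} ⋯ ∂_d^{α d} f` for a multiindex `α`. -/
def multiDeriv {d : ℕ} (α : Fin d → ℕ) (f : EuclideanSpace ℝ (Fin d) → ℂ) :
    EuclideanSpace ℝ (Fin d) → ℂ :=
  (List.finRange d).foldr (fun i g => (coordDeriv i)^[α i] g) f

open scoped ENNReal

section

variable {X E : Type*} [MeasurableSpace X] [NormedAddCommGroup E]

lemma eLpNorm_two_sq (g : X → E) (ν : Measure X) :
    eLpNorm g 2 ν ^ 2 = ∫⁻ x, ‖g x‖ₑ ^ 2 ∂ν := by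
  simpa using eLpNorm_nnreal_pow_eq_lintegral (f := g) (p := 2) (μ := ν) two_ne_zero

lemma eLpNorm_two_sq_le_tsum_of_le_sum {ι : Type*} (g : X → E) {μ : Measure X}
    {ν : ι → Measure X} (h : μ ≤ Measure.sum ν) :
    eLpNorm g 2 μ ^ 2 ≤ ∑' i, eLpNorm g 2 (ν i) ^ 2 := by
  simp only [eLpNorm_two_sq, ← lintegral_sum_measure]
  exact lintegral_mono' h le_rfl

lemma tsum_eLpNorm_two_sq_le_of_sum_le {ι : Type*} (g : X → E) {μ : Measure X}
    {ν : ι → Measure X} {k : ℝ≥0∞} (h : Measure.sum ν ≤ k • μ) :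
    ∑' i, eLpNorm g 2 (ν i) ^ 2 ≤ k * eLpNorm g 2 μ ^ 2 := by
  simp only [eLpNorm_two_sq, ← lintegral_sum_measure]
  rw [← smul_eq_mul, ← lintegral_smul_measure]
  exact lintegral_mono' h le_rfl

end

section

variable {X ι : Type*} [MeasurableSpace X] [Countable ι] {μ : Measure X} {Γ : Set X}
  {Q : ι → Set X}

lemma sum_restrict_eq_withDensity_tsum_indicator (hQ : ∀ i, MeasurableSet (Q i)) :
    Measure.sum (fun i => μ.restrict (Q i)) =
      μ.withDensity (∑' i, (Q i).indicator (1 : X → ℝ≥0∞)) := by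
  rw [withDensity_tsum fun i => measurable_one.indicator (hQ i)]
  simp only [withDensity_indicator_one (hQ _)]

lemma restrict_le_sum_restrict (hΓ : MeasurableSet Γ) (hQ : ∀ i, MeasurableSet (Q i))
    (h : ∀ᵐ x ∂μ, Γ.indicator (1 : X → ℝ≥0∞) x ≤ ∑' i, (Q i).indicator 1 x) :
    μ.restrict Γ ≤ Measure.sum (fun i => μ.restrict (Q i)) := by
  rw [sum_restrict_eq_withDensity_tsum_indicator hQ, ← withDensity_indicator_one hΓ]
  refine withDensity_mono (h.mono fun x hx => ?_)
  simpa [tsum_apply (Pi.summable.2 fun _ => ENNReal.summable)] using hx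

lemma sum_restrict_le_smul_restrict (hΓ : MeasurableSet Γ) (hQ : ∀ i, MeasurableSet (Q i))
    (k : ℝ≥0∞) (h : ∀ᵐ x ∂μ, ∑' i, (Q i).indicator (1 : X → ℝ≥0∞) x ≤ k * Γ.indicator 1 x) :
    Measure.sum (fun i => μ.restrict (Q i)) ≤ k • μ.restrict Γ := by
  rw [sum_restrict_eq_withDensity_tsum_indicator hQ, ← withDensity_indicator_one hΓ,
    ← withDensity_smul k (measurable_one.indicator hΓ)]
  refine withDensity_mono (h.mono fun x hx => ?_)
  simpa [tsum_apply (Pi.summable.2 fun _ => ENNReal.summable)] using hx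

end

lemma ENNReal.tsum_sq_not_dominated_le {ι J : Type*} (a : J → ℝ≥0∞) (b : ι → J → ℝ≥0∞)
    {c : ι → ℝ≥0∞} (hc₀ : ∀ i, c i ≠ 0) (hc : ∀ i, c i ≠ ∞) :
    ∑' j : ({j | ∀ i, b i j ≤ c i * a j}ᶜ : Set J), a j ^ 2 ≤
      ∑' i, (c i)⁻¹ ^ 2 * ∑' j, b i j ^ 2 := by
  have hbad (j : J) (hj : ¬ ∀ i, b i j ≤ c i * a j) :
      a j ^ 2 ≤ ∑' i, (c i)⁻¹ ^ 2 * b i j ^ 2 := by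
    obtain ⟨i, hi⟩ := not_forall.mp hj
    have : a j ≤ (c i)⁻¹ * b i j :=
      (ENNReal.mul_le_iff_le_inv (hc₀ i) (hc i)).mp (not_le.mp hi).le
    calc a j ^ 2 ≤ ((c i)⁻¹ * b i j) ^ 2 := by gcongr
      _ = (c i)⁻¹ ^ 2 * b i j ^ 2 := mul_pow _ _ _
      _ ≤ _ := ENNReal.le_tsum i
  calc _ ≤ ∑' j : ({j | ∀ i, b i j ≤ c i * a j}ᶜ : Set J), ∑' i, (c i)⁻¹ ^ 2 * b i j ^ 2 :=
        ENNReal.tsum_le_tsum fun j => hbad j j.2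
    _ ≤ ∑' j, ∑' i, (c i)⁻¹ ^ 2 * b i j ^ 2 :=
        ENNReal.tsum_comp_le_tsum_of_injective Subtype.val_injective _
    _ = ∑' i, (c i)⁻¹ ^ 2 * ∑' j, b i j ^ 2 := by
        rw [ENNReal.tsum_comm]
        simp only [ENNReal.tsum_mul_left]

lemma ENNReal.prod_tsum_eq_tsum_pi {ι : Type*} : ∀ {d : ℕ} (φ : Fin d → ι → ℝ≥0∞),
    ∏ i, ∑' n, φ i n = ∑' x : Fin d → ι, ∏ i, φ i (x i)
  | 0, φ => by simp
  | d + 1, φ => by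
    rw [Fin.prod_univ_succ, ENNReal.prod_tsum_eq_tsum_pi, ← ENNReal.tsum_mul_right]
    simp_rw [← ENNReal.tsum_mul_left]
    rw [← ENNReal.tsum_prod, ← (Fin.consEquiv fun _ => ι).tsum_eq]
    simp [Fin.prod_univ_succ]

lemma inv_sq_mul_sq_eq_prod {d : ℕ} (α : Fin d → ℕ) {B : Fin d → ℝ} (hB : ∀ i, B i ≠ 0)
    {κ ε : ℝ} (hκ : 0 < κ) (hε : 0 < ε) (D : ℝ) {F : ℝ} (hF : F ≠ 0) :
    (√(2 ^ d * κ / ε) * (∏ i, (2 * B i) ^ α i) * F)⁻¹ ^ 2 *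
        (κ * (D * (∏ i, B i ^ α i) * F) ^ 2) =
      ε * D ^ 2 * ∏ i, (2⁻¹ * 4⁻¹ ^ α i) := by
  have hsq : √(2 ^ d * κ / ε) ^ 2 = 2 ^ d * κ / ε := Real.sq_sqrt (by positivity)
  have hP : ∏ i, B i ^ α i ≠ 0 := Finset.prod_ne_zero_iff.2 fun i _ => pow_ne_zero _ (hB i)
  have h2B : ∏ i, (2 * B i) ^ α i = 2 ^ (∑ i, α i) * ∏ i, B i ^ α i := by
    simp only [mul_pow, Finset.prod_mul_distrib, Finset.prod_pow_eq_pow_sum]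
  have h4 : ∏ i, (2⁻¹ * 4⁻¹ ^ α i : ℝ) = (2 ^ d)⁻¹ * ((2 ^ (∑ i, α i)) ^ 2)⁻¹ := by
    rw [Finset.prod_mul_distrib, Finset.prod_pow_eq_pow_sum, Finset.prod_const,
      Finset.card_univ, Fintype.card_fin, inv_pow, inv_pow, ← pow_mul, mul_comm _ 2, pow_mul]
    norm_num
  rw [h2B, h4]
  field_simp
  rw [hsq]
  field_simp

lemma mul_prod_pow_mul_pos {d : ℕ} {b : Fin d → ℝ} (hb : ∀ i, 0 < b i) (α : Fin d → ℕ)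
    {s F : ℝ} (hs : 0 < s) (hF : 0 < F) : 0 < s * (∏ i, b i ^ α i) * F :=
  mul_pos (mul_pos hs (Finset.prod_pos fun i _ => pow_pos (hb i) _)) hF

lemma tsum_inv_sq_mul_sq_le {d : ℕ} {B : Fin d → ℝ} (hB : ∀ i, 0 < B i) {κ ε : ℝ}
    (hκ : 0 < κ) (hε : 0 < ε) {D : ℝ} (hD : 0 < D) (F : (Fin d → ℕ) → ℝ) (hF : ∀ α, 0 < F α) :
    ∑' α : Fin d → ℕ,
        (ENNReal.ofReal (√(2 ^ d * κ / ε) * (∏ i, (2 * B i) ^ α i) * F α))⁻¹ ^ 2 *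
          (ENNReal.ofReal κ * ENNReal.ofReal (D * (∏ i, B i ^ α i) * F α) ^ 2) ≤
      ENNReal.ofReal (ε * D ^ 2) := by
  have hterm (α : Fin d → ℕ) :
      (ENNReal.ofReal (√(2 ^ d * κ / ε) * (∏ i, (2 * B i) ^ α i) * F α))⁻¹ ^ 2 *
          (ENNReal.ofReal κ * ENNReal.ofReal (D * (∏ i, B i ^ α i) * F α) ^ 2) =
        ENNReal.ofReal (ε * D ^ 2) * ∏ i, ENNReal.ofReal (2⁻¹ * 4⁻¹ ^ α i) := by
    have hc := mul_prod_pow_mul_pos (fun i => mul_pos two_pos (hB i)) α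
      (Real.sqrt_pos.2 (by positivity : 0 < 2 ^ d * κ / ε)) (hF α)
    have hA := (mul_prod_pow_mul_pos hB α hD (hF α)).le
    rw [← ENNReal.ofReal_inv_of_pos hc, ← ENNReal.ofReal_pow (inv_pos.2 hc).le,
      ← ENNReal.ofReal_pow hA, ← ENNReal.ofReal_mul hκ.le,
      ← ENNReal.ofReal_mul (by positivity),
      inv_sq_mul_sq_eq_prod α (fun i => (hB i).ne') hκ hε D (hF α).ne',
      ENNReal.ofReal_mul (by positivity),
      ENNReal.ofReal_prod_of_nonneg fun i _ => by positivity]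
  have hgeom : ∑' n : ℕ, ENNReal.ofReal (2⁻¹ * 4⁻¹ ^ n) = ENNReal.ofReal (2 / 3) := by
    rw [← ENNReal.ofReal_tsum_of_nonneg (fun n => by positivity)
      ((summable_geometric_of_lt_one (by norm_num) (by norm_num)).mul_left _),
      tsum_mul_left, tsum_geometric_of_lt_one (by norm_num) (by norm_num)]
    norm_num
  calc _ = ENNReal.ofReal (ε * D ^ 2) *
        ∏ _i : Fin d, ∑' n : ℕ, ENNReal.ofReal (2⁻¹ * 4⁻¹ ^ n) := by
        rw [ENNReal.prod_tsum_eq_tsum_pi, ← ENNReal.tsum_mul_left]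
        exact tsum_congr hterm
    _ ≤ ENNReal.ofReal (ε * D ^ 2) * 1 := by
        gcongr
        rw [hgeom, Finset.prod_const]
        exact pow_le_one' (by rw [ENNReal.ofReal_le_one]; norm_num) _
    _ = ENNReal.ofReal (ε * D ^ 2) := mul_one _

theorem statement2_general (d : ℕ)
    (Γ : Set (EuclideanSpace ℝ (Fin d))) (hΓ : IsOpen Γ)
    (J : Type) (hJ : Countable J)
    (Q : J → Set (EuclideanSpace ℝ (Fin d))) (hQopen : ∀ j, IsOpen (Q j))
    (κ : ℝ) (hκ : 1 ≤ κ)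
    (hcov : ∀ᵐ x ∂volume,
      Set.indicator Γ (fun _ => (1 : ENNReal)) x ≤
          ∑' j, Set.indicator (Q j) (fun _ => (1 : ENNReal)) x ∧
        ∑' j, Set.indicator (Q j) (fun _ => (1 : ENNReal)) x ≤
          ENNReal.ofReal κ * Set.indicator Γ (fun _ => (1 : ENNReal)) x)
    (f : EuclideanSpace ℝ (Fin d) → ℂ)
    (D : ℝ) (hD : 0 < D) (B : Fin d → ℝ) (hB : ∀ i, 0 < B i)
    (μ : ℝ)
    (hder : ∀ α : Fin d → ℕ,
      eLpNorm (multiDeriv α f) 2 (volume.restrict Γ) ≤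
        ENNReal.ofReal (D * (∏ i, B i ^ α i) * ((∑ i, α i).factorial : ℝ) ^ μ))
    (ε : ℝ) (hε : 0 < ε) :
    ∃ Jgd : Set J,
      (eLpNorm f 2 (volume.restrict Γ)) ^ 2 ≤
          (∑' j : Jgd, (eLpNorm f 2 (volume.restrict (Q j.1))) ^ 2) +
            ENNReal.ofReal (ε * D ^ 2) ∧
        ∀ j ∈ Jgd, ∀ α : Fin d → ℕ,
          eLpNorm (multiDeriv α f) 2 (volume.restrict (Q j)) ≤
            ENNReal.ofReal (Real.sqrt (2 ^ d * κ / ε) * (∏ i, (2 * B i) ^ α i) *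
              ((∑ i, α i).factorial : ℝ) ^ μ) * eLpNorm f 2 (volume.restrict (Q j)) := by
  have hκ0 : 0 < κ := one_pos.trans_le hκ
  have hF (α : Fin d → ℕ) : 0 < ((∑ i, α i).factorial : ℝ) ^ μ :=
    Real.rpow_pos_of_pos (Nat.cast_pos.2 (Nat.factorial_pos _)) μ
  set c : (Fin d → ℕ) → ℝ≥0∞ := fun α => ENNReal.ofReal (Real.sqrt (2 ^ d * κ / ε) *
    (∏ i, (2 * B i) ^ α i) * ((∑ i, α i).factorial : ℝ) ^ μ)
  have hc₀ (α : Fin d → ℕ) : c α ≠ 0 := (ENNReal.ofReal_pos.2 (mul_prod_pow_mul_pos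
    (fun i => mul_pos two_pos (hB i)) α (Real.sqrt_pos.2 (by positivity)) (hF α))).ne'
  have hQ (j : J) : MeasurableSet (Q j) := (hQopen j).measurableSet
  have hΓQ : volume.restrict Γ ≤ Measure.sum fun j => volume.restrict (Q j) :=
    restrict_le_sum_restrict hΓ.measurableSet hQ (hcov.mono fun _ hx => hx.1)
  have hQΓ :
      (Measure.sum fun j => volume.restrict (Q j)) ≤ ENNReal.ofReal κ • volume.restrict Γ :=
    sum_restrict_le_smul_restrict hΓ.measurableSet hQ _ (hcov.mono fun _ hx => hx.2)
  refine ⟨{j | ∀ α, eLpNorm (multiDeriv α f) 2 (volume.restrict (Q j)) ≤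
    c α * eLpNorm f 2 (volume.restrict (Q j))}, ?_, fun j hj => hj⟩
  have hbad := ENNReal.tsum_sq_not_dominated_le (fun j => eLpNorm f 2 (volume.restrict (Q j)))
    (fun α j => eLpNorm (multiDeriv α f) 2 (volume.restrict (Q j))) hc₀
    fun _ => ENNReal.ofReal_ne_top
  calc eLpNorm f 2 (volume.restrict Γ) ^ 2
      ≤ ∑' j, eLpNorm f 2 (volume.restrict (Q j)) ^ 2 := eLpNorm_two_sq_le_tsum_of_le_sum f hΓQ
    _ = _ := (ENNReal.summable.tsum_add_tsum_compl ENNReal.summable).symm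
    _ ≤ _ := by
        gcongr
        refine hbad.trans ((ENNReal.tsum_le_tsum fun α => ?_).trans
          (tsum_inv_sq_mul_sq_le hB hκ0 hε hD _ hF))
        gcongr
        exact (tsum_eLpNorm_two_sq_le_of_sum_le _ hQΓ).trans (by gcongr; exact hder α)

/-- Lemma 3.4: selection of good covering elements. The family `{Q j}` is an
essential covering of the open set `Γ` with overlap at most `κ` (expressed via indicator
functions a.e.), and `f` is smooth on `Γ` with `L²(Γ)` derivative bounds `D B^α (|α|!)^μ`. -/
theorem statement2 (d : ℕ) (hd : 1 ≤ d)
    (Γ : Set (EuclideanSpace ℝ (Fin d))) (hΓ : IsOpen Γ)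
    (J : Type) (hJ : Countable J)
    (Q : J → Set (EuclideanSpace ℝ (Fin d))) (hQopen : ∀ j, IsOpen (Q j))
    (κ : ℝ) (hκ : 1 ≤ κ)
    (hcov : ∀ᵐ x ∂volume,
      Set.indicator Γ (fun _ => (1 : ENNReal)) x ≤
          ∑' j, Set.indicator (Q j) (fun _ => (1 : ENNReal)) x ∧
        ∑' j, Set.indicator (Q j) (fun _ => (1 : ENNReal)) x ≤
          ENNReal.ofReal κ * Set.indicator Γ (fun _ => (1 : ENNReal)) x)
    (f : EuclideanSpace ℝ (Fin d) → ℂ) (hf : ContDiffOn ℝ (⊤ : ℕ∞) f Γ)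
    (D : ℝ) (hD : 0 < D) (B : Fin d → ℝ) (hB : ∀ i, 0 < B i)
    (μ : ℝ) (hμ0 : 0 ≤ μ) (hμ1 : μ ≤ 1)
    (hder : ∀ α : Fin d → ℕ,
      eLpNorm (multiDeriv α f) 2 (volume.restrict Γ) ≤
        ENNReal.ofReal (D * (∏ i, B i ^ α i) * ((∑ i, α i).factorial : ℝ) ^ μ))
    (ε : ℝ) (hε : 0 < ε) :
    ∃ Jgd : Set J,
      (eLpNorm f 2 (volume.restrict Γ)) ^ 2 ≤
          (∑' j : Jgd, (eLpNorm f 2 (volume.restrict (Q j.1))) ^ 2) +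
            ENNReal.ofReal (ε * D ^ 2) ∧
        ∀ j ∈ Jgd, ∀ α : Fin d → ℕ,
          eLpNorm (multiDeriv α f) 2 (volume.restrict (Q j)) ≤
            ENNReal.ofReal (Real.sqrt (2 ^ d * κ / ε) * (∏ i, (2 * B i) ^ α i) *
              ((∑ i, α i).factorial : ℝ) ^ μ) * eLpNorm f 2 (volume.restrict (Q j)) :=
  statement2_general d Γ hΓ J hJ Q hQopen κ hκ hcov f D hD B hB μ hder ε hε
end
end

section
/- For every dimension d ≥ 1 there exists a constant C = C(d) > 0 with the following property. Let μ ∈ [0,1], B ∈ (0,∞)^d, A > 0, and suppose g : (0,1)^d → ℂ is smooth with ‖∂^α g‖_{L²((0,1)^d)} ≤ A·B^α·(|α|!)^μ for all α ∈ ℕ^d. Then for every α ∈ ℕ^d, ‖∂^α g‖_{L^∞((0,1)^d)} ≤ C·2^d·d!·A·(1 + |B|²)^{d/2}·(2B)^α·(|α|!)^μ, where |B| is the Euclidean norm of B and (2B)^α = 2^{|α|}B^α. -/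
/-!
On `(0,1)` the fundamental theorem of calculus, averaged over the base point, gives
`|v x| ≤ ‖v‖₁ + ‖v'‖₁`. Applying this in each of the `d` coordinate directions in turn, integrating
out one coordinate at a time, bounds `|F x|` on the cube by `∑_{t ⊆ {1,…,d}} ‖∂^{𝟙_t} F‖₁`.
For `F = ∂^α g` the mixed partials commute, so `∂^{𝟙_t} ∂^α g = ∂^{α + 𝟙_t} g`, and `‖·‖₁ ≤ ‖·‖₂` on
the unit cube. The hypothesis bounds each of the `2^d` terms by `A B^α B^{𝟙_t} ((|α| + |t|)!)^μ`,
and `B^{𝟙_t} ≤ (1 + |B|²)^{d/2}`, `(|α| + |t|)! ≤ 2^{|α| + d} d! |α|!`, so `C = 2^d` works.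
-/

open MeasureTheory Real

noncomputable section

/-- The open unit hypercube `(0,1)^d`. -/
def unitCube (d : ℕ) : Set (EuclideanSpace ℝ (Fin d)) :=
  {x | ∀ i, x i ∈ Set.Ioo (0:ℝ) 1}

open Function Set
open scoped ENNReal Nat

variable {d : ℕ}

theorem unitCube_eq_preimage :
    unitCube d = WithLp.ofLp ⁻¹' univ.pi fun _ : Fin d => Ioo (0 : ℝ) 1 := by
  ext x
  simp [unitCube]

theorem isOpen_unitCube : IsOpen (unitCube d) := by
  rw [unitCube_eq_preimage]
  exact (isOpen_set_pi finite_univ fun _ _ => isOpen_Ioo).preimage (PiLp.continuous_ofLp 2 _)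

section PartialDerivatives

variable {U : Set (EuclideanSpace ℝ (Fin d))} {f g : EuclideanSpace ℝ (Fin d) → ℂ}

theorem measurable_coordDeriv (i : Fin d) (f : EuclideanSpace ℝ (Fin d) → ℂ) :
    Measurable (coordDeriv i f) :=
  measurable_fderiv_apply_const ℝ f _

theorem ContDiffOn.coordDeriv (hf : ContDiffOn ℝ (⊤ : ℕ∞) f U) (hU : IsOpen U) (i : Fin d) :
    ContDiffOn ℝ (⊤ : ℕ∞) (coordDeriv i f) U :=
  (hf.fderiv_of_isOpen hU le_rfl).clm_apply contDiffOn_const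

theorem coordDeriv_congr (h : EqOn f g U) (hU : IsOpen U) (i : Fin d) :
    EqOn (coordDeriv i f) (coordDeriv i g) U := fun x hx => by
  simp only [coordDeriv, (Filter.eventuallyEq_of_mem (hU.mem_nhds hx) h).fderiv_eq]

theorem coordDeriv_comm (hf : ContDiffOn ℝ (⊤ : ℕ∞) f U) (hU : IsOpen U) (i j : Fin d) :
    EqOn (coordDeriv i (coordDeriv j f)) (coordDeriv j (coordDeriv i f)) U := by
  intro x hx
  have hfx : ContDiffAt ℝ (⊤ : ℕ∞) f x := (hf x hx).contDiffAt (hU.mem_nhds hx)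
  have hf' : DifferentiableAt ℝ (fderiv ℝ f) x :=
    (hfx.fderiv_right (m := (⊤ : ℕ∞)) le_rfl).differentiableAt (by simp)
  have hswap : ∀ v w, fderiv ℝ (fun y => fderiv ℝ f y w) x v = fderiv ℝ (fderiv ℝ f) x v w :=
    fun v w => by simp [fderiv_clm_apply hf' (differentiableAt_const w)]
  unfold coordDeriv
  rw [hswap, hswap]
  exact hfx.isSymmSndFDerivAt (by simp; exact WithTop.coe_le_coe.2 le_top) _ _

def listDeriv (L : List (Fin d)) (f : EuclideanSpace ℝ (Fin d) → ℂ) :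
    EuclideanSpace ℝ (Fin d) → ℂ :=
  L.foldr coordDeriv f

theorem listDeriv_append (L M : List (Fin d)) (f : EuclideanSpace ℝ (Fin d) → ℂ) :
    listDeriv (L ++ M) f = listDeriv L (listDeriv M f) :=
  List.foldr_append ..

theorem listDeriv_replicate (n : ℕ) (i : Fin d) (f : EuclideanSpace ℝ (Fin d) → ℂ) :
    listDeriv (List.replicate n i) f = (coordDeriv i)^[n] f := by
  induction n with
  | zero => rfl
  | succ n ih =>
    rw [List.replicate_succ, iterate_succ_apply', ← ih]
    rfl

theorem measurable_listDeriv {f : EuclideanSpace ℝ (Fin d) → ℂ} (hf : Measurable f) :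
    ∀ L : List (Fin d), Measurable (listDeriv L f)
  | [] => hf
  | i :: _ => measurable_coordDeriv i _

theorem ContDiffOn.listDeriv (hf : ContDiffOn ℝ (⊤ : ℕ∞) f U) (hU : IsOpen U) :
    ∀ L : List (Fin d), ContDiffOn ℝ (⊤ : ℕ∞) (listDeriv L f) U
  | [] => hf
  | i :: L => (hf.listDeriv hU L).coordDeriv hU i

theorem listDeriv_congr (h : EqOn f g U) (hU : IsOpen U) :
    ∀ L : List (Fin d), EqOn (listDeriv L f) (listDeriv L g) U
  | [] => h
  | i :: L => coordDeriv_congr (listDeriv_congr h hU L) hU i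

theorem listDeriv_perm {L L' : List (Fin d)} (hL : L.Perm L')
    (hf : ContDiffOn ℝ (⊤ : ℕ∞) f U) (hU : IsOpen U) :
    EqOn (listDeriv L f) (listDeriv L' f) U := by
  induction hL with
  | nil => exact eqOn_refl _ _
  | cons i _ ih => exact coordDeriv_congr ih hU i
  | swap i j L => exact coordDeriv_comm (hf.listDeriv hU L) hU j i
  | trans _ _ ih₁ ih₂ => exact ih₁.trans ih₂

def multiindexList (α : Fin d → ℕ) : List (Fin d) :=
  (List.finRange d).flatMap fun i => List.replicate (α i) i

theorem count_multiindexList (α : Fin d → ℕ) (j : Fin d) :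
    (multiindexList α).count j = α j := by
  simp [multiindexList, List.count_flatMap, comp_def, List.count_replicate, ← Fin.sum_univ_def]

theorem multiDeriv_eq_listDeriv (α : Fin d → ℕ) (f : EuclideanSpace ℝ (Fin d) → ℂ) :
    multiDeriv α f = listDeriv (multiindexList α) f := by
  unfold multiDeriv multiindexList
  induction List.finRange d with
  | nil => rfl
  | cons i L ih =>
    rw [List.foldr_cons, ih, List.flatMap_cons, listDeriv_append, listDeriv_replicate]

theorem multiDeriv_zero (f : EuclideanSpace ℝ (Fin d) → ℂ) : multiDeriv 0 f = f := by
  have : multiindexList (0 : Fin d → ℕ) = [] := List.flatMap_eq_nil_iff.2 fun _ _ => rfl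
  rw [multiDeriv_eq_listDeriv, this]
  rfl

theorem measurable_multiDeriv (α : Fin d → ℕ) (hf : Measurable f) :
    Measurable (multiDeriv α f) := by
  rw [multiDeriv_eq_listDeriv]
  exact measurable_listDeriv hf _

theorem ContDiffOn.multiDeriv (hf : ContDiffOn ℝ (⊤ : ℕ∞) f U) (hU : IsOpen U) (α : Fin d → ℕ) :
    ContDiffOn ℝ (⊤ : ℕ∞) (multiDeriv α f) U := by
  rw [multiDeriv_eq_listDeriv]
  exact hf.listDeriv hU _

theorem multiDeriv_congr (h : EqOn f g U) (hU : IsOpen U) (α : Fin d → ℕ) :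
    EqOn (multiDeriv α f) (multiDeriv α g) U := by
  simpa only [multiDeriv_eq_listDeriv] using listDeriv_congr h hU _

theorem multiDeriv_multiDeriv (hf : ContDiffOn ℝ (⊤ : ℕ∞) f U) (hU : IsOpen U)
    (α β : Fin d → ℕ) :
    EqOn (multiDeriv β (multiDeriv α f)) (multiDeriv (α + β) f) U := by
  simp only [multiDeriv_eq_listDeriv, ← listDeriv_append]
  refine listDeriv_perm (List.perm_iff_count.2 fun j => ?_) hf hU
  simp only [List.count_append, count_multiindexList, Pi.add_apply, add_comm]

theorem multiDeriv_coordDeriv (hf : ContDiffOn ℝ (⊤ : ℕ∞) f U) (hU : IsOpen U)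
    (α : Fin d → ℕ) (i : Fin d) :
    EqOn (multiDeriv α (coordDeriv i f)) (multiDeriv (α + Pi.single i 1) f) U := by
  have : coordDeriv i f = listDeriv [i] f := rfl
  simp only [multiDeriv_eq_listDeriv, this, ← listDeriv_append]
  refine listDeriv_perm (List.perm_iff_count.2 fun j => ?_) hf hU
  simp only [List.count_append, count_multiindexList, Pi.add_apply]
  rw [List.count_singleton, Pi.single_apply]
  grind

end PartialDerivatives

section CubeMeasure

instance : IsProbabilityMeasure (volume.restrict (Ioo (0 : ℝ) 1)) :=
  ⟨by simp⟩

theorem volume_restrict_unitCube :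
    (volume : Measure (EuclideanSpace ℝ (Fin d))).restrict (unitCube d) =
      (Measure.pi fun _ : Fin d => volume.restrict (Ioo (0 : ℝ) 1)).map (WithLp.toLp 2) := by
  have hmp := PiLp.volume_preserving_toLp (Fin d)
  rw [← hmp.map_eq, Measure.restrict_map hmp.measurable isOpen_unitCube.measurableSet,
    unitCube_eq_preimage, volume_pi]
  exact congrArg _ (Measure.restrict_pi_pi _ _)

instance : IsProbabilityMeasure
    ((volume : Measure (EuclideanSpace ℝ (Fin d))).restrict (unitCube d)) := by
  rw [volume_restrict_unitCube]
  exact Measure.isProbabilityMeasure_map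
    (PiLp.volume_preserving_toLp (Fin d)).measurable.aemeasurable

theorem lmarginal_restrict_congr {ι : Type*} [DecidableEq ι] {X : ι → Type*}
    [∀ i, MeasurableSpace (X i)] {ν : ∀ i, Measure (X i)} [∀ i, SigmaFinite (ν i)]
    {S : ∀ i, Set (X i)} (hS : ∀ i, MeasurableSet (S i)) (s : Finset ι)
    {f g : (∀ i, X i) → ℝ≥0∞} (hfg : EqOn f g (univ.pi S)) {x : ∀ i, X i} (hx : x ∈ univ.pi S) :
    (∫⋯∫⁻_s, f ∂fun i => (ν i).restrict (S i)) x =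
      (∫⋯∫⁻_s, g ∂fun i => (ν i).restrict (S i)) x := by
  refine lintegral_congr_ae ?_
  rw [← Measure.restrict_pi_pi]
  filter_upwards [ae_restrict_mem (MeasurableSet.univ_pi fun i : s => hS i)] with y hy
  refine hfg fun j _ => ?_
  by_cases hj : j ∈ s
  · simpa [updateFinset, hj] using hy ⟨j, hj⟩ trivial
  · simpa [updateFinset, hj] using hx j trivial

end CubeMeasure

section OneDimensional

variable {E : Type*} [NormedAddCommGroup E] [NormedSpace ℝ E] [CompleteSpace E] {v w : ℝ → E}

theorem enorm_le_enorm_add_setLIntegral_deriv {s : Set ℝ} (hs : s.OrdConnected)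
    (hv : ∀ t ∈ s, HasDerivAt v (w t) t) (hw : IntegrableOn w s) {x y : ℝ} (hx : x ∈ s)
    (hy : y ∈ s) : ‖v x‖ₑ ≤ ‖v y‖ₑ + ∫⁻ t in s, ‖w t‖ₑ := by
  have hsub : uIcc y x ⊆ s := hs.uIcc_subset hy hx
  have hftc : v x = v y + ∫ t in y..x, w t := by
    rw [intervalIntegral.integral_eq_sub_of_hasDerivAt (fun t ht => hv t (hsub ht))
      (hw.mono_set hsub).intervalIntegrable]
    abel
  have hint : ‖∫ t in y..x, w t‖ₑ ≤ ∫⁻ t in s, ‖w t‖ₑ := by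
    rw [← ofReal_norm, intervalIntegral.norm_integral_eq_norm_integral_uIoc,
      ofReal_norm]
    exact (enorm_integral_le_lintegral_enorm _).trans
      (lintegral_mono_set (uIoc_subset_uIcc.trans hsub))
  calc ‖v x‖ₑ ≤ ‖v y‖ₑ + ‖∫ t in y..x, w t‖ₑ := hftc ▸ enorm_add_le _ _
    _ ≤ ‖v y‖ₑ + ∫⁻ t in s, ‖w t‖ₑ := by gcongr

theorem enorm_le_setLIntegral_add_setLIntegral_deriv
    (hv : ∀ t ∈ Ioo (0 : ℝ) 1, HasDerivAt v (w t) t)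
    (hw : AEStronglyMeasurable w (volume.restrict (Ioo 0 1))) {x : ℝ} (hx : x ∈ Ioo (0 : ℝ) 1) :
    ‖v x‖ₑ ≤ (∫⁻ t in Ioo 0 1, ‖v t‖ₑ) + ∫⁻ t in Ioo 0 1, ‖w t‖ₑ := by
  by_cases hfin : ∫⁻ t in Ioo 0 1, ‖w t‖ₑ = ∞
  · simp [hfin]
  have hwint : IntegrableOn w (Ioo 0 1) := ⟨hw, lt_top_iff_ne_top.2 hfin⟩
  calc ‖v x‖ₑ = ∫⁻ _ in Ioo (0 : ℝ) 1, ‖v x‖ₑ := by simp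
    _ ≤ ∫⁻ y in Ioo 0 1, (‖v y‖ₑ + ∫⁻ t in Ioo 0 1, ‖w t‖ₑ) :=
      setLIntegral_mono' measurableSet_Ioo fun y hy =>
        enorm_le_enorm_add_setLIntegral_deriv ordConnected_Ioo hv hwint hx hy
    _ = (∫⁻ t in Ioo 0 1, ‖v t‖ₑ) + ∫⁻ t in Ioo 0 1, ‖w t‖ₑ := by
      rw [lintegral_add_right _ measurable_const]
      simp

end OneDimensional

section CubeBound

def indicatorIndex (t : Finset (Fin d)) : Fin d → ℕ := fun i => if i ∈ t then 1 else 0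

theorem indicatorIndex_empty : indicatorIndex (∅ : Finset (Fin d)) = 0 := by
  ext i
  simp [indicatorIndex]

theorem indicatorIndex_insert {i : Fin d} {t : Finset (Fin d)} (hi : i ∉ t) :
    indicatorIndex (insert i t) = indicatorIndex t + Pi.single i 1 := by
  ext j
  rcases eq_or_ne j i with rfl | hj <;> simp [indicatorIndex, *]

theorem hasDerivAt_comp_toLp_update {F : EuclideanSpace ℝ (Fin d) → ℂ} (x : Fin d → ℝ)
    (i : Fin d) {u : ℝ} (hF : DifferentiableAt ℝ F (WithLp.toLp 2 (update x i u))) :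
    HasDerivAt (fun t => F (WithLp.toLp 2 (update x i t)))
      (coordDeriv i F (WithLp.toLp 2 (update x i u))) u :=
  hF.hasFDerivAt.comp_hasDerivAt u
    ((PiLp.hasFDerivAt_toLp 2 _).comp_hasDerivAt u (hasDerivAt_update x i u))

theorem enorm_le_setLIntegral_update {F : EuclideanSpace ℝ (Fin d) → ℂ}
    (hF : ContDiffOn ℝ (⊤ : ℕ∞) F (unitCube d)) (i : Fin d) {x : Fin d → ℝ}
    (hx : x ∈ univ.pi fun _ => Ioo (0 : ℝ) 1) :
    ‖F (WithLp.toLp 2 x)‖ₑ ≤ (∫⁻ u in Ioo 0 1, ‖F (WithLp.toLp 2 (update x i u))‖ₑ) +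
      ∫⁻ u in Ioo 0 1, ‖coordDeriv i F (WithLp.toLp 2 (update x i u))‖ₑ := by
  have hslice : ∀ u ∈ Ioo (0 : ℝ) 1, WithLp.toLp 2 (update x i u) ∈ unitCube d :=
    fun u hu j => (update_mem_pi_iff_of_mem hx).2 (fun _ => hu) j trivial
  have hderiv : ∀ u ∈ Ioo (0 : ℝ) 1, HasDerivAt (fun t => F (WithLp.toLp 2 (update x i t)))
      (coordDeriv i F (WithLp.toLp 2 (update x i u))) u := fun u hu =>
    hasDerivAt_comp_toLp_update x i <| ((hF _ (hslice u hu)).contDiffAt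
      (isOpen_unitCube.mem_nhds (hslice u hu))).differentiableAt (by simp)
  have hmeas : Measurable fun u => coordDeriv i F (WithLp.toLp 2 (update x i u)) :=
    (measurable_coordDeriv i F).comp ((PiLp.continuous_toLp 2 _).measurable.comp
      (measurable_update x))
  simpa using enorm_le_setLIntegral_add_setLIntegral_deriv hderiv hmeas.aestronglyMeasurable
    (hx i trivial)

theorem enorm_le_sum_lmarginal_multiDeriv {F : EuclideanSpace ℝ (Fin d) → ℂ}
    (hF : ContDiffOn ℝ (⊤ : ℕ∞) F (unitCube d)) (hFm : Measurable F) (s : Finset (Fin d))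
    {x : Fin d → ℝ} (hx : x ∈ univ.pi fun _ => Ioo (0 : ℝ) 1) :
    ‖F (WithLp.toLp 2 x)‖ₑ ≤ ∑ t ∈ s.powerset,
      (∫⋯∫⁻_s, (fun y => ‖multiDeriv (indicatorIndex t) F (WithLp.toLp 2 y)‖ₑ)
        ∂fun _ => volume.restrict (Ioo 0 1)) x := by
  induction s using Finset.induction_on generalizing F x with
  | empty => simp [indicatorIndex_empty, multiDeriv_zero]
  | insert i s hi ih =>
    have hmeas : ∀ (G : EuclideanSpace ℝ (Fin d) → ℂ), Measurable G → ∀ t : Finset (Fin d),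
        Measurable fun y : Fin d → ℝ => ‖multiDeriv (indicatorIndex t) G (WithLp.toLp 2 y)‖ₑ :=
      fun G hG t => (measurable_multiDeriv _ hG).enorm.comp (PiLp.continuous_toLp 2 _).measurable
    have hintegrate : ∀ G, ContDiffOn ℝ (⊤ : ℕ∞) G (unitCube d) → Measurable G →
        ∫⁻ u in Ioo 0 1, ‖G (WithLp.toLp 2 (update x i u))‖ₑ ≤ ∑ t ∈ s.powerset,
          (∫⋯∫⁻_insert i s, (fun y => ‖multiDeriv (indicatorIndex t) G (WithLp.toLp 2 y)‖ₑ)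
            ∂fun _ => volume.restrict (Ioo 0 1)) x := by
      intro G hG hGm
      simp only [lmarginal_insert _ (hmeas G hGm _) hi]
      exact (setLIntegral_mono' measurableSet_Ioo fun u hu =>
          ih hG hGm ((update_mem_pi_iff_of_mem hx).2 fun _ => hu)).trans_eq
        (lintegral_finsetSum _ fun t _ => ((hmeas G hGm t).lmarginal _).comp (measurable_update x))
    calc ‖F (WithLp.toLp 2 x)‖ₑ
        ≤ (∫⁻ u in Ioo 0 1, ‖F (WithLp.toLp 2 (update x i u))‖ₑ) +
            ∫⁻ u in Ioo 0 1, ‖coordDeriv i F (WithLp.toLp 2 (update x i u))‖ₑ :=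
          enorm_le_setLIntegral_update hF i hx
      _ ≤ _ := add_le_add (hintegrate F hF hFm)
          (hintegrate _ (hF.coordDeriv isOpen_unitCube i) (measurable_coordDeriv i F))
      _ = _ := by
          rw [Finset.sum_powerset_insert hi]
          refine congrArg _ (Finset.sum_congr rfl fun t ht => ?_)
          refine lmarginal_restrict_congr (fun _ => measurableSet_Ioo) _ (fun y hy => ?_) hx
          have hit : i ∉ t := fun h => hi (Finset.mem_powerset.1 ht h)
          simp only [indicatorIndex_insert hit]
          rw [multiDeriv_coordDeriv hF isOpen_unitCube _ _ fun j => hy j trivial]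

theorem enorm_le_sum_setLIntegral_multiDeriv {F : EuclideanSpace ℝ (Fin d) → ℂ}
    (hF : ContDiffOn ℝ (⊤ : ℕ∞) F (unitCube d)) (hFm : Measurable F) {y : EuclideanSpace ℝ (Fin d)}
    (hy : y ∈ unitCube d) :
    ‖F y‖ₑ ≤ ∑ t : Finset (Fin d), ∫⁻ z in unitCube d, ‖multiDeriv (indicatorIndex t) F z‖ₑ := by
  have h := enorm_le_sum_lmarginal_multiDeriv hF hFm Finset.univ (x := y.ofLp) fun j _ => hy j
  rw [Finset.powerset_univ] at h
  refine h.trans_eq (Finset.sum_congr rfl fun t _ => ?_)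
  rw [lmarginal_univ, volume_restrict_unitCube, ← MeasurableEquiv.coe_toLp, lintegral_map_equiv]

theorem enorm_multiDeriv_le_sum_setLIntegral {g : EuclideanSpace ℝ (Fin d) → ℂ}
    (hg : ContDiffOn ℝ (⊤ : ℕ∞) g (unitCube d)) (α : Fin d → ℕ) {y : EuclideanSpace ℝ (Fin d)}
    (hy : y ∈ unitCube d) :
    ‖multiDeriv α g y‖ₑ ≤
      ∑ t : Finset (Fin d), ∫⁻ z in unitCube d, ‖multiDeriv (α + indicatorIndex t) g z‖ₑ := by
  classical
  -- `g` need not be measurable off the cube, so we replace it by its extension by zero.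
  set G := (unitCube d).piecewise g 0
  have hGg : EqOn G g (unitCube d) := fun _ hz => piecewise_eq_of_mem _ _ _ hz
  have hG : ContDiffOn ℝ (⊤ : ℕ∞) G (unitCube d) := hg.congr hGg
  have hGm : Measurable G :=
    hg.continuousOn.measurable_piecewise continuousOn_const isOpen_unitCube.measurableSet
  rw [← multiDeriv_congr hGg isOpen_unitCube α hy]
  refine (enorm_le_sum_setLIntegral_multiDeriv (hG.multiDeriv isOpen_unitCube α)
    (measurable_multiDeriv α hGm) hy).trans_eq (Finset.sum_congr rfl fun t _ => ?_)
  refine setLIntegral_congr_fun isOpen_unitCube.measurableSet fun z hz => ?_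
  rw [multiDeriv_multiDeriv hG isOpen_unitCube α _ hz, multiDeriv_congr hGg isOpen_unitCube _ hz]

end CubeBound

section Numerics

theorem Nat.factorial_add_le_two_pow_mul (m n : ℕ) : (m + n)! ≤ 2 ^ (m + n) * (m ! * n !) := by
  rw [← Nat.choose_mul_factorial_mul_factorial (Nat.le_add_right m n), Nat.add_sub_cancel_left,
    mul_assoc]
  exact Nat.mul_le_mul_right _ (Nat.choose_le_two_pow _ _)

theorem factorial_add_rpow_le {μ : ℝ} (hμ0 : 0 ≤ μ) (hμ1 : μ ≤ 1) (N : ℕ) {k n : ℕ} (hk : k ≤ n) :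
    ((N + k)! : ℝ) ^ μ ≤ 2 ^ (N + n) * n ! * (N ! : ℝ) ^ μ := by
  have hone : (1 : ℝ) ≤ 2 ^ (N + n) * n ! := one_le_mul_of_one_le_of_one_le (one_le_pow₀ one_le_two)
    (by exact_mod_cast n.factorial_pos)
  calc ((N + k)! : ℝ) ^ μ ≤ ((2 ^ (N + n) * n ! * N ! : ℕ) : ℝ) ^ μ := by
        gcongr
        calc (N + k)! ≤ (N + n)! := Nat.factorial_le (by omega)
          _ ≤ 2 ^ (N + n) * n ! * N ! :=
            (Nat.factorial_add_le_two_pow_mul N n).trans_eq (by ring)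
    _ = (2 ^ (N + n) * n ! : ℝ) ^ μ * (N ! : ℝ) ^ μ := by
        push_cast
        exact Real.mul_rpow (by positivity) (by positivity)
    _ ≤ 2 ^ (N + n) * n ! * (N ! : ℝ) ^ μ := by
        gcongr
        exact Real.rpow_le_self_of_one_le hone hμ1

theorem prod_pow_indicatorIndex_le {B : Fin d → ℝ} (hB : ∀ i, 0 ≤ B i) (t : Finset (Fin d)) :
    ∏ i, B i ^ indicatorIndex t i ≤ (1 + ∑ i, B i ^ 2) ^ ((d : ℝ) / 2) := by
  set M := 1 + ∑ i, B i ^ 2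
  have hM : 1 ≤ M := le_add_of_nonneg_right (Finset.sum_nonneg fun i _ => sq_nonneg _)
  have hfactor : ∀ i, B i ^ indicatorIndex t i ≤ √M := by
    intro i
    by_cases hi : i ∈ t
    · simp only [indicatorIndex, if_pos hi, pow_one]
      refine Real.le_sqrt_of_sq_le ?_
      have := Finset.single_le_sum (fun j _ => sq_nonneg (B j)) (Finset.mem_univ i)
      linarith
    · simpa [indicatorIndex, hi] using Real.one_le_sqrt.2 hM
  calc ∏ i, B i ^ indicatorIndex t i ≤ ∏ _i : Fin d, √M :=
        Finset.prod_le_prod (fun i _ => pow_nonneg (hB i) _) fun i _ => hfactor i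
    _ = M ^ ((d : ℝ) / 2) := by
        rw [Finset.prod_const, Finset.card_univ, Fintype.card_fin, Real.sqrt_eq_rpow,
          ← Real.rpow_natCast, ← Real.rpow_mul (by linarith)]
        ring_nf

theorem sum_indicatorIndex_bound_le {μ : ℝ} (hμ0 : 0 ≤ μ) (hμ1 : μ ≤ 1) {B : Fin d → ℝ}
    (hB : ∀ i, 0 ≤ B i) {A : ℝ} (hA : 0 ≤ A) (α : Fin d → ℕ) :
    ∑ t : Finset (Fin d), A * (∏ i, B i ^ (α + indicatorIndex t) i) *
        ((∑ i, (α + indicatorIndex t) i)! : ℝ) ^ μ ≤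
      2 ^ d * 2 ^ d * (d ! : ℝ) * A * (1 + ∑ i, B i ^ 2) ^ ((d : ℝ) / 2) *
        (∏ i, (2 * B i) ^ α i) * ((∑ i, α i)! : ℝ) ^ μ := by
  set N := ∑ i, α i
  set M := (1 + ∑ i, B i ^ 2) ^ ((d : ℝ) / 2)
  have hterm : ∀ t : Finset (Fin d), A * (∏ i, B i ^ (α + indicatorIndex t) i) *
      ((∑ i, (α + indicatorIndex t) i)! : ℝ) ^ μ ≤
        A * ((∏ i, B i ^ α i) * M) * (2 ^ (N + d) * d ! * (N ! : ℝ) ^ μ) := by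
    intro t
    have hprod : ∏ i, B i ^ (α + indicatorIndex t) i =
        (∏ i, B i ^ α i) * ∏ i, B i ^ indicatorIndex t i := by
      simp only [Pi.add_apply, pow_add, Finset.prod_mul_distrib]
    have hsum : ∑ i, (α + indicatorIndex t) i = N + t.card := by
      simp [N, indicatorIndex, Finset.sum_add_distrib]
    rw [hprod, hsum]
    have hα : 0 ≤ ∏ i, B i ^ α i := Finset.prod_nonneg fun i _ => pow_nonneg (hB i) _
    gcongr
    · exact prod_pow_indicatorIndex_le hB t
    · exact factorial_add_rpow_le hμ0 hμ1 N (card_finset_fin_le t)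
  have hpow : ∏ i, (2 * B i) ^ α i = 2 ^ N * ∏ i, B i ^ α i := by
    rw [← Finset.prod_pow_eq_pow_sum, ← Finset.prod_mul_distrib]
    simp only [mul_pow]
  calc _ ≤ ∑ _t : Finset (Fin d),
          A * ((∏ i, B i ^ α i) * M) * (2 ^ (N + d) * d ! * (N ! : ℝ) ^ μ) :=
        Finset.sum_le_sum fun t _ => hterm t
    _ = _ := by
        rw [Finset.sum_const, Finset.card_univ, Fintype.card_finset, Fintype.card_fin, nsmul_eq_mul,
          hpow, pow_add]
        push_cast
        ring

end Numerics

theorem statement11_general (d : ℕ) :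
    ∃ C > (0:ℝ), ∀ (μ : ℝ), 0 ≤ μ → μ ≤ 1 →
      ∀ (B : Fin d → ℝ), (∀ i, 0 < B i) → ∀ (A : ℝ), 0 < A →
      ∀ (g : EuclideanSpace ℝ (Fin d) → ℂ), ContDiffOn ℝ (⊤ : ℕ∞) g (unitCube d) →
      (∀ α : Fin d → ℕ,
        eLpNorm (multiDeriv α g) 2 (volume.restrict (unitCube d)) ≤
          ENNReal.ofReal (A * (∏ i, B i ^ α i) * ((∑ i, α i).factorial : ℝ) ^ μ)) →
      ∀ α : Fin d → ℕ,
        eLpNorm (multiDeriv α g) ⊤ (volume.restrict (unitCube d)) ≤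
          ENNReal.ofReal (C * 2 ^ d * (d.factorial : ℝ) * A *
            (1 + ∑ i, (B i) ^ 2) ^ ((d : ℝ) / 2) *
            (∏ i, (2 * B i) ^ α i) * ((∑ i, α i).factorial : ℝ) ^ μ) := by
  refine ⟨2 ^ d, by positivity, fun μ hμ0 hμ1 B hB A hA g hg hL2 α => ?_⟩
  have hL1 : ∀ β : Fin d → ℕ, ∫⁻ z in unitCube d, ‖multiDeriv β g z‖ₑ ≤
      ENNReal.ofReal (A * (∏ i, B i ^ β i) * ((∑ i, β i)! : ℝ) ^ μ) := fun β => by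
    rw [← eLpNorm_one_eq_lintegral_enorm]
    refine (eLpNorm_le_eLpNorm_of_exponent_le (by norm_num) ?_).trans (hL2 β)
    exact (hg.multiDeriv isOpen_unitCube β).continuousOn.aestronglyMeasurable
      isOpen_unitCube.measurableSet
  have hnonneg : ∀ t : Finset (Fin d), 0 ≤ A * (∏ i, B i ^ (α + indicatorIndex t) i) *
      ((∑ i, (α + indicatorIndex t) i)! : ℝ) ^ μ := fun t =>
    mul_nonneg (mul_nonneg hA.le (Finset.prod_nonneg fun i _ => pow_nonneg (hB i).le _))
      (by positivity)
  calc eLpNorm (multiDeriv α g) ⊤ (volume.restrict (unitCube d))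
      ≤ ∑ t : Finset (Fin d), ENNReal.ofReal (A * (∏ i, B i ^ (α + indicatorIndex t) i) *
          ((∑ i, (α + indicatorIndex t) i)! : ℝ) ^ μ) := by
        rw [eLpNorm_exponent_top]
        refine eLpNormEssSup_le_of_ae_enorm_bound ?_
        filter_upwards [ae_restrict_mem isOpen_unitCube.measurableSet] with y hy
        exact (enorm_multiDeriv_le_sum_setLIntegral hg α hy).trans
          (Finset.sum_le_sum fun t _ => hL1 _)
    _ = ENNReal.ofReal (∑ t : Finset (Fin d), A * (∏ i, B i ^ (α + indicatorIndex t) i) *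
          ((∑ i, (α + indicatorIndex t) i)! : ℝ) ^ μ) :=
        (ENNReal.ofReal_sum_of_nonneg fun t _ => hnonneg t).symm
    _ ≤ _ := ENNReal.ofReal_le_ofReal
        (sum_indicatorIndex_bound_le hμ0 hμ1 (fun i => (hB i).le) hA.le α)

/-- Sobolev embedding step in the proof of Corollary 3.2: from `L²` derivative
bounds `A B^α (|α|!)^μ` on the unit hypercube one gets the `L^∞` bounds
`C·2^d·d!·A·(1+|B|²)^{d/2}·(2B)^α·(|α|!)^μ`, with a constant `C` depending only on `d`. -/
theorem statement11 (d : ℕ) (hd : 1 ≤ d) :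
    ∃ C > (0:ℝ), ∀ (μ : ℝ), 0 ≤ μ → μ ≤ 1 →
      ∀ (B : Fin d → ℝ), (∀ i, 0 < B i) → ∀ (A : ℝ), 0 < A →
      ∀ (g : EuclideanSpace ℝ (Fin d) → ℂ), ContDiffOn ℝ (⊤ : ℕ∞) g (unitCube d) →
      (∀ α : Fin d → ℕ,
        eLpNorm (multiDeriv α g) 2 (volume.restrict (unitCube d)) ≤
          ENNReal.ofReal (A * (∏ i, B i ^ α i) * ((∑ i, α i).factorial : ℝ) ^ μ)) →
      ∀ α : Fin d → ℕ,
        eLpNorm (multiDeriv α g) ⊤ (volume.restrict (unitCube d)) ≤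
          ENNReal.ofReal (C * 2 ^ d * (d.factorial : ℝ) * A *
            (1 + ∑ i, (B i) ^ 2) ^ ((d : ℝ) / 2) *
            (∏ i, (2 * B i) ^ α i) * ((∑ i, α i).factorial : ℝ) ^ μ) :=
  statement11_general d
end
end

section
/- For every p ∈ (0,1] there exists a constant K_p > 0 such that for all t ≥ 0, Σ_{m=0}^∞ t^m/(m!)^p ≤ K_p·e^{t^{1/p}}. -/
/-!
With `s = t ^ (1 / p)` the `m`-th term is `(s ^ m / m !) ^ p`. Bounding `s ^ m / m !` by the
`m`-th term of `exp (s / p)` rescaled, `p ^ m * exp (s / p)`, and raising to the power `p` gives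
`(p ^ p) ^ m * exp s`; for `p < 1` the ratio `p ^ p` is below `1`, so the series is dominated by
a geometric one. For `p = 1` the series is exactly `exp t`.
-/

open Real Nat

lemma pow_div_factorial_le_pow_mul_exp {c x : ℝ} (hc : 0 < c) (hx : 0 ≤ x) (m : ℕ) :
    x ^ m / m ! ≤ c ^ m * exp (x / c) := by
  calc x ^ m / m ! = c ^ m * ((x / c) ^ m / m !) := by
        rw [← mul_div_assoc, ← mul_pow, mul_div_cancel₀ _ hc.ne']
    _ ≤ c ^ m * exp (x / c) := by
        gcongr
        exact pow_div_factorial_le_exp _ (by positivity) m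

lemma pow_div_factorial_rpow_le {p s : ℝ} (hp : 0 < p) (hs : 0 ≤ s) (m : ℕ) :
    (s ^ m / m !) ^ p ≤ (p ^ p) ^ m * exp s := by
  calc (s ^ m / m !) ^ p ≤ (p ^ m * exp (s / p)) ^ p := by
        gcongr
        exact pow_div_factorial_le_pow_mul_exp hp hs m
    _ = (p ^ p) ^ m * exp s := by
        rw [mul_rpow (by positivity) (exp_pos _).le, ← rpow_pow_comm hp.le, ← exp_mul,
          div_mul_cancel₀ _ hp.ne']

lemma tsum_pow_div_factorial_rpow_le {p s : ℝ} (hp0 : 0 < p) (hp1 : p < 1) (hs : 0 ≤ s) :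
    ∑' m : ℕ, (s ^ m / m !) ^ p ≤ (1 - p ^ p)⁻¹ * exp s := by
  have hpp_nonneg : 0 ≤ p ^ p := rpow_nonneg hp0.le p
  have hpp_lt_one : p ^ p < 1 := rpow_lt_one hp0.le hp1 hp0
  have hgeom : Summable fun m : ℕ => (p ^ p) ^ m * exp s :=
    (summable_geometric_of_lt_one hpp_nonneg hpp_lt_one).mul_right _
  have hle := pow_div_factorial_rpow_le hp0 hs
  calc ∑' m : ℕ, (s ^ m / m !) ^ p ≤ ∑' m : ℕ, (p ^ p) ^ m * exp s :=
        (hgeom.of_nonneg_of_le (fun _ => by positivity) hle).tsum_le_tsum hle hgeom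
    _ = (1 - p ^ p)⁻¹ * exp s := by
        rw [tsum_mul_right, tsum_geometric_of_lt_one hpp_nonneg hpp_lt_one]

lemma rpow_one_div_pow_div_rpow {p t : ℝ} (hp : p ≠ 0) (ht : 0 ≤ t) (m : ℕ) :
    ((t ^ (1 / p)) ^ m / m !) ^ p = t ^ m / (m ! : ℝ) ^ p := by
  rw [div_rpow (by positivity) (by positivity), ← rpow_pow_comm (by positivity), one_div,
    rpow_inv_rpow ht hp]

/-- for every `p ∈ (0,1]` there is `K_p > 0` with
`∑_{m=0}^∞ t^m/(m!)^p ≤ K_p e^{t^{1/p}}` for all `t ≥ 0`. -/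
theorem statement12 (p : ℝ) (hp0 : 0 < p) (hp1 : p ≤ 1) :
    ∃ K > (0:ℝ), ∀ t : ℝ, 0 ≤ t →
      ∑' m : ℕ, t ^ m / ((m.factorial : ℝ) ^ p) ≤ K * Real.exp (t ^ (1 / p)) := by
  rcases hp1.lt_or_eq with hlt | rfl
  · refine ⟨(1 - p ^ p)⁻¹, inv_pos.mpr (sub_pos.mpr (rpow_lt_one hp0.le hlt hp0)),
      fun t ht => ?_⟩
    simpa only [rpow_one_div_pow_div_rpow hp0.ne' ht] using
      tsum_pow_div_factorial_rpow_le hp0 hlt (rpow_nonneg ht (1 / p))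
  · refine ⟨1, one_pos, fun t _ => ?_⟩
    simp [exp_eq_exp_ℝ, NormedSpace.exp_eq_tsum_div]
end

section
/- Let ω ⊆ ℝ^d be a measurable set and let λ > 0. Suppose there exists a constant C > 0 such that every f ∈ L²(ℝ^d) whose Fourier transform 𝓕f is supported in the cube [−√λ, √λ]^d satisfies ‖f‖_{L²(ℝ^d)} ≤ C·‖f‖_{L²(ω)}. Then ω is thick: there exist θ ∈ (0,1] and L > 0 such that |ω ∩ (x + (0,L)^d)| ≥ θ L^d for every x ∈ ℝ^d. -/
/-!
Translating the inverse Fourier transform `g` of the indicator of `[-√λ, √λ]^d` gives band-limited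
functions `g (· - x₀)`, all with the same `L²` norm `N > 0` and the same sup bound `M`. Choose `R`
so that `g` has `L²` mass at most `N / (2C)` outside the ball `B(0, R)`. The spectral inequality
for `g (· - x₀)` then gives `N ≤ C (M |ω ∩ B(x₀, R)|^{1/2} + N / (2C))`, so
`|ω ∩ B(x₀, R)| ≥ (N / (2CM))²` uniformly in `x₀`. Since every cube of side `2R` contains a
ball of radius `R`, this is thickness.
-/

open MeasureTheory Real Complex Filter Topology Metric
open scoped ENNReal

noncomputable section

def sincKernel (s a : ℝ) : ℂ := ∫ t in (-s)..s, cexp (I * a * t)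

lemma norm_cexp_I_mul_mul (a t : ℝ) : ‖cexp (I * a * t)‖ = 1 := by
  rw [show I * a * t = ((a * t : ℝ) : ℂ) * I by push_cast; ring, norm_exp_ofReal_mul_I]

lemma continuous_sincKernel (s : ℝ) : Continuous (sincKernel s) :=
  intervalIntegral.continuous_parametric_intervalIntegral_of_continuous' (by fun_prop) _ _

lemma norm_sincKernel_le {s : ℝ} (hs : 0 ≤ s) (a : ℝ) : ‖sincKernel s a‖ ≤ 2 * s := by
  have := intervalIntegral.norm_integral_le_of_norm_le_const (a := -s) (b := s) (C := 1)
    (f := fun t : ℝ => cexp (I * a * t)) fun t _ => (norm_cexp_I_mul_mul a t).le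
  rwa [one_mul, show s - -s = 2 * s by ring, abs_of_nonneg (by positivity)] at this

lemma abs_mul_norm_sincKernel_le (s a : ℝ) : |a| * ‖sincKernel s a‖ ≤ 2 := by
  rcases eq_or_ne a 0 with rfl | ha
  · simp
  have hIa : I * a ≠ 0 := mul_ne_zero I_ne_zero (ofReal_ne_zero.mpr ha)
  rw [sincKernel, integral_exp_mul_complex hIa, norm_div, norm_mul, norm_I, one_mul, norm_real,
    Real.norm_eq_abs, mul_div_cancel₀ _ (abs_ne_zero.mpr ha)]
  calc _ ≤ ‖cexp (I * a * s)‖ + ‖cexp (I * a * ↑(-s))‖ := norm_sub_le _ _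
    _ = 2 := by rw [norm_cexp_I_mul_mul, norm_cexp_I_mul_mul]; norm_num

lemma sq_norm_sincKernel_le {s : ℝ} (hs : 0 ≤ s) (a : ℝ) :
    ‖sincKernel s a‖ ^ 2 ≤ 4 * (s ^ 2 + 1) * (1 + a ^ 2)⁻¹ := by
  rw [← div_eq_mul_inv, le_div_iff₀ (by positivity)]
  have h₁ : ‖sincKernel s a‖ ^ 2 ≤ (2 * s) ^ 2 :=
    pow_le_pow_left₀ (norm_nonneg _) (norm_sincKernel_le hs a) 2
  have h₂ : (|a| * ‖sincKernel s a‖) ^ 2 ≤ 2 ^ 2 :=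
    pow_le_pow_left₀ (by positivity) (abs_mul_norm_sincKernel_le s a) 2
  rw [mul_pow, sq_abs] at h₂
  linarith

lemma memLp_sincKernel {s : ℝ} (hs : 0 ≤ s) : MemLp (sincKernel s) 2 := by
  refine (memLp_two_iff_integrable_sq_norm (continuous_sincKernel s).aestronglyMeasurable).mpr ?_
  refine (integrable_inv_one_add_sq.const_mul (4 * (s ^ 2 + 1))).mono'
    ((continuous_sincKernel s).norm.pow 2).aestronglyMeasurable (.of_forall fun a => ?_)
  rw [Real.norm_of_nonneg (by positivity)]
  exact sq_norm_sincKernel_le hs a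

lemma sincKernel_zero (s : ℝ) : sincKernel s 0 = 2 * s := by
  simp [sincKernel]; ring

def modulatedIndicator (s b t : ℝ) : ℂ := (Set.Icc (-s) s).indicator (fun t => cexp (I * b * t)) t

lemma cexp_mul_modulatedIndicator (s a b t : ℝ) :
    cexp (I * a * t) * modulatedIndicator s b t = modulatedIndicator s (a + b) t := by
  by_cases ht : t ∈ Set.Icc (-s) s
  · simp only [modulatedIndicator, Set.indicator_of_mem ht, ← Complex.exp_add]
    push_cast; ring_nf
  · simp [modulatedIndicator, Set.indicator_of_notMem ht]

lemma integral_modulatedIndicator {s : ℝ} (hs : 0 ≤ s) (a : ℝ) :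
    ∫ t, modulatedIndicator s a t = sincKernel s a := by
  rw [sincKernel, intervalIntegral.integral_of_le (by linarith), ← integral_Icc_eq_integral_Ioc]
  exact integral_indicator measurableSet_Icc

lemma memLp_modulatedIndicator (s b : ℝ) : MemLp (modulatedIndicator s b) 2 := by
  refine (memLp_indicator_iff_restrict measurableSet_Icc).mpr ?_
  have : IsFiniteMeasure (volume.restrict (Set.Icc (-s) s)) :=
    isFiniteMeasure_restrict.mpr measure_Icc_lt_top.ne
  exact MemLp.of_bound (by fun_prop) 1 (.of_forall fun t => (norm_cexp_I_mul_mul b t).le)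

section CubeKernel

variable {d : ℕ}

lemma integral_prod_apply {𝕜 : Type*} [RCLike 𝕜] (f : Fin d → ℝ → 𝕜) :
    ∫ ξ : EuclideanSpace ℝ (Fin d), ∏ i, f i (ξ i) = ∏ i, ∫ t, f i t :=
  ((EuclideanSpace.volume_preserving_symm_measurableEquiv_toLp (Fin d)).integral_comp'
    (fun y => ∏ i, f i (y i))).trans (integral_fintype_prod_volume_eq_prod f)

lemma memLp_two_prod_apply {𝕜 : Type*} [RCLike 𝕜] {f : Fin d → ℝ → 𝕜}
    (hf : ∀ i, MemLp (f i) 2) :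
    MemLp (fun ξ : EuclideanSpace ℝ (Fin d) => ∏ i, f i (ξ i)) 2 volume := by
  have hmeas : AEStronglyMeasurable (fun y : Fin d → ℝ => ∏ i, f i (y i)) volume :=
    Finset.aestronglyMeasurable_fun_prod _ fun i _ =>
      (hf i).1.comp_quasiMeasurePreserving (Measure.quasiMeasurePreserving_eval _ i)
  have hpi : MemLp (fun y : Fin d → ℝ => ∏ i, f i (y i)) 2 volume := by
    refine (memLp_two_iff_integrable_sq_norm hmeas).mpr ?_
    simp_rw [norm_prod, ← Finset.prod_pow]
    exact Integrable.fintype_prod fun i =>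
      (memLp_two_iff_integrable_sq_norm (hf i).1).mp (hf i)
  exact hpi.comp_measurePreserving (EuclideanSpace.volume_preserving_symm_measurableEquiv_toLp _)

/-- The function `g` of the header: the inverse Fourier transform of the indicator of `[-s, s]^d`,
with `sincKernel s a = 2 sin (s a) / a` in each coordinate. -/
def cubeKernel (d : ℕ) (s : ℝ) (z : EuclideanSpace ℝ (Fin d)) : ℂ :=
  (((2 * π) ^ (-(d : ℝ)) : ℝ) : ℂ) * ∏ i, sincKernel s (z i)

def modulatedCube (s : ℝ) (x₀ ξ : EuclideanSpace ℝ (Fin d)) : ℂ :=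
  ∏ i, modulatedIndicator s (-x₀ i) (ξ i)

lemma memLp_modulatedCube (s : ℝ) (x₀ : EuclideanSpace ℝ (Fin d)) :
    MemLp (modulatedCube s x₀) 2 volume :=
  memLp_two_prod_apply fun _ => memLp_modulatedIndicator s _

lemma modulatedCube_eq_zero {s : ℝ} {x₀ ξ : EuclideanSpace ℝ (Fin d)}
    (hξ : ¬ ∀ i, ξ i ∈ Set.Icc (-s) s) : modulatedCube s x₀ ξ = 0 := by
  obtain ⟨i, hi⟩ := not_forall.mp hξ
  exact Finset.prod_eq_zero (Finset.mem_univ i) (Set.indicator_of_notMem hi _)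

lemma inverseFourier_modulatedCube {s : ℝ} (hs : 0 ≤ s) (x x₀ : EuclideanSpace ℝ (Fin d)) :
    (((2 * π) ^ (-(d : ℝ)) : ℝ) : ℂ) * ∫ ξ : EuclideanSpace ℝ (Fin d),
        cexp (I * ↑(∑ i, x i * ξ i)) * modulatedCube s x₀ ξ =
      cubeKernel d s (x - x₀) := by
  have hexp (ξ : EuclideanSpace ℝ (Fin d)) :
      cexp (I * ↑(∑ i, x i * ξ i)) = ∏ i, cexp (I * x i * ξ i) := by
    rw [← Complex.exp_sum]; push_cast; rw [Finset.mul_sum]; simp_rw [mul_assoc]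
  simp_rw [modulatedCube, hexp, ← Finset.prod_mul_distrib, cexp_mul_modulatedIndicator,
    integral_prod_apply, integral_modulatedIndicator hs, ← sub_eq_add_neg]
  rfl

lemma continuous_cubeKernel (s : ℝ) : Continuous (cubeKernel d s) :=
  continuous_const.mul <| continuous_finsetProd _ fun i _ =>
    (continuous_sincKernel s).comp (EuclideanSpace.proj i).continuous

lemma memLp_cubeKernel {s : ℝ} (hs : 0 ≤ s) : MemLp (cubeKernel d s) 2 volume :=
  (memLp_two_prod_apply fun _ => memLp_sincKernel hs).const_mul _

lemma norm_cubeKernel_le {s : ℝ} (hs : 0 ≤ s) (z : EuclideanSpace ℝ (Fin d)) :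
    ‖cubeKernel d s z‖ ≤ (2 * π) ^ (-(d : ℝ)) * (2 * s) ^ d := by
  rw [cubeKernel, norm_mul, norm_prod, norm_real, Real.norm_of_nonneg (by positivity)]
  gcongr
  exact (Finset.prod_le_prod (fun i _ => norm_nonneg _) fun i _ => norm_sincKernel_le hs _).trans
    (by simp)

lemma cubeKernel_zero_ne_zero {s : ℝ} (hs : 0 < s) : cubeKernel d s 0 ≠ 0 := by
  simp only [cubeKernel, PiLp.zero_apply, sincKernel_zero, Finset.prod_const, Finset.card_univ,
    Fintype.card_fin]
  exact mul_ne_zero (ofReal_ne_zero.mpr (by positivity)) (pow_ne_zero _ (by norm_cast; positivity))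

lemma eLpNorm_cubeKernel_ne_zero {s : ℝ} (hs : 0 < s) : eLpNorm (cubeKernel d s) 2 volume ≠ 0 := by
  rw [Ne, eLpNorm_eq_zero_iff (continuous_cubeKernel s).aestronglyMeasurable two_ne_zero,
    (continuous_cubeKernel s).ae_eq_iff_eq volume continuous_zero]
  exact fun h => cubeKernel_zero_ne_zero hs (congr_fun h 0)

end CubeKernel

section Observability

variable {α G : Type*} [MeasurableSpace α] [NormedAddCommGroup G] {μ : Measure α}

lemma eLpNorm_restrict_le_measure_inter_add {f : α → G} (hf : AEStronglyMeasurable f μ) {M : ℝ}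
    (hM : ∀ x, ‖f x‖ ≤ M) {p : ℝ≥0∞} (hp : 1 ≤ p) (ω : Set α) {K : Set α} (hK : MeasurableSet K) :
    eLpNorm f p (μ.restrict ω) ≤
      μ (K ∩ ω) ^ p.toReal⁻¹ * ENNReal.ofReal M + eLpNorm f p (μ.restrict Kᶜ) := by
  have hfω : AEStronglyMeasurable f (μ.restrict ω) := hf.restrict
  calc eLpNorm f p (μ.restrict ω)
      = eLpNorm (K.indicator f + Kᶜ.indicator f) p (μ.restrict ω) := by
        rw [Set.indicator_self_add_compl]
    _ ≤ eLpNorm (K.indicator f) p (μ.restrict ω) + eLpNorm (Kᶜ.indicator f) p (μ.restrict ω) :=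
        eLpNorm_add_le (hfω.indicator hK) (hfω.indicator hK.compl) hp
    _ = eLpNorm f p (μ.restrict (K ∩ ω)) + eLpNorm f p (μ.restrict (Kᶜ ∩ ω)) := by
        rw [eLpNorm_indicator_eq_eLpNorm_restrict hK,
          eLpNorm_indicator_eq_eLpNorm_restrict hK.compl, Measure.restrict_restrict hK,
          Measure.restrict_restrict hK.compl]
    _ ≤ _ := by
        gcongr
        · simpa using eLpNorm_le_of_ae_bound (μ := μ.restrict (K ∩ ω)) (p := p) (.of_forall hM)
        · exact Set.inter_subset_left

lemma div_sq_le_measure_inter {f : α → G} (hf : AEStronglyMeasurable f μ) {M : ℝ}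
    (hM : ∀ x, ‖f x‖ ≤ M) {c : ℝ≥0∞} {ω K : Set α} (hK : MeasurableSet K)
    (hfin : eLpNorm f 2 μ ≠ ∞) (hobs : eLpNorm f 2 μ ≤ c * eLpNorm f 2 (μ.restrict ω))
    (htail : c * eLpNorm f 2 (μ.restrict Kᶜ) ≤ eLpNorm f 2 μ / 2) :
    (eLpNorm f 2 μ / 2 / (c * ENNReal.ofReal M)) ^ 2 ≤ μ (K ∩ ω) := by
  set N := eLpNorm f 2 μ
  set r := μ (K ∩ ω) ^ (2 : ℝ≥0∞).toReal⁻¹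
  have hN : N ≤ r * (c * ENNReal.ofReal M) + N / 2 :=
    calc N ≤ c * eLpNorm f 2 (μ.restrict ω) := hobs
      _ ≤ c * (r * ENNReal.ofReal M + eLpNorm f 2 (μ.restrict Kᶜ)) := by
          gcongr; exact eLpNorm_restrict_le_measure_inter_add hf hM one_le_two ω hK
      _ = r * (c * ENNReal.ofReal M) + c * eLpNorm f 2 (μ.restrict Kᶜ) := by ring
      _ ≤ r * (c * ENNReal.ofReal M) + N / 2 := by gcongr
  have hhalf : N / 2 ≤ r * (c * ENNReal.ofReal M) := by
    rw [← ENNReal.sub_half hfin]; exact tsub_le_iff_right.mpr hN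
  calc (N / 2 / (c * ENNReal.ofReal M)) ^ 2 ≤ r ^ 2 := by
        gcongr; exact ENNReal.div_le_of_le_mul hhalf
    _ = μ (K ∩ ω) := by
        rw [← ENNReal.rpow_natCast, ← ENNReal.rpow_mul]; norm_num

end Observability

section Translates

variable {E G : Type*} [NormedAddCommGroup E] [MeasurableSpace E] [NormedAddCommGroup G]

lemma tendsto_eLpNorm_restrict_compl_ball [OpensMeasurableSpace E] {μ : Measure E} {g : E → G}
    {p : ℝ≥0∞} (hp : p ≠ ∞) (hg : MemLp g p μ) (x : E) :
    Tendsto (fun R => eLpNorm g p (μ.restrict (ball x R)ᶜ)) atTop (𝓝 0) := by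
  rcases eq_or_ne p 0 with rfl | hp0
  · simp
  simp_rw [eLpNorm_eq_lintegral_rpow_enorm_toReal hp0 hp]
  have hpos : 0 < 1 / p.toReal := one_div_pos.mpr (ENNReal.toReal_pos hp0 hp)
  rw [← ENNReal.zero_rpow_of_pos hpos]
  refine Tendsto.ennrpow_const _ ?_
  simp_rw [← lintegral_indicator measurableSet_ball.compl]
  rw [← lintegral_zero]
  refine tendsto_lintegral_filter_of_dominated_convergence' (fun y => ‖g y‖ₑ ^ p.toReal)
    (.of_forall fun R => (hg.1.enorm.pow_const _).indicator measurableSet_ball.compl)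
    (.of_forall fun R => .of_forall fun y => Set.indicator_le_self _ _ y)
    (lintegral_rpow_enorm_lt_top_of_eLpNorm_lt_top hp0 hp hg.2).ne (.of_forall fun y => ?_)
  refine tendsto_const_nhds.congr' ((eventually_gt_atTop (dist y x)).mono fun R hR => ?_)
  exact (Set.indicator_of_notMem (not_not.mpr (mem_ball.mpr hR)) _).symm

variable [BorelSpace E] [MeasurableAdd E] {μ : Measure E} [μ.IsAddRightInvariant]

lemma eLpNorm_comp_sub_restrict_compl_ball {g : E → G} (hg : AEStronglyMeasurable g μ)
    (p : ℝ≥0∞) (x₀ : E) (R : ℝ) :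
    eLpNorm (fun y => g (y - x₀)) p (μ.restrict (ball x₀ R)ᶜ) =
      eLpNorm g p (μ.restrict (ball 0 R)ᶜ) := by
  have hpre : (· - x₀) ⁻¹' (ball (0 : E) R)ᶜ = (ball x₀ R)ᶜ := by
    ext y; simp [dist_eq_norm]
  have := (measurePreserving_sub_right μ x₀).restrict_preimage
    (s := (ball 0 R)ᶜ) measurableSet_ball.compl
  rw [hpre] at this
  exact eLpNorm_comp_measurePreserving hg.restrict this

theorem exists_measure_ball_inter_ge_of_observability {g : E → G} (hg : MemLp g 2 μ)
    (hg0 : eLpNorm g 2 μ ≠ 0) {M : ℝ} (hM0 : 0 < M) (hM : ∀ z, ‖g z‖ ≤ M) {ω : Set E} {C : ℝ}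
    (hC : 0 < C) (hobs : ∀ x₀, eLpNorm (fun y => g (y - x₀)) 2 μ ≤
      ENNReal.ofReal C * eLpNorm (fun y => g (y - x₀)) 2 (μ.restrict ω)) :
    ∃ R > 0, ∃ κ > 0, ∀ x₀, ENNReal.ofReal κ ≤ μ (ball x₀ R ∩ ω) := by
  set N := eLpNorm g 2 μ
  have htail : Tendsto (fun R => ENNReal.ofReal C * eLpNorm g 2 (μ.restrict (ball 0 R)ᶜ))
      atTop (𝓝 0) := by
    simpa using ENNReal.Tendsto.const_mul
      (tendsto_eLpNorm_restrict_compl_ball ENNReal.ofNat_ne_top hg 0) (.inr ENNReal.ofReal_ne_top)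
  obtain ⟨R, hR, hR0⟩ :=
    ((htail.eventually (gt_mem_nhds (ENNReal.half_pos hg0))).and (eventually_gt_atTop 0)).exists
  have hNfin : N ≠ ∞ := hg.eLpNorm_ne_top
  set κ := (N / 2 / (ENNReal.ofReal C * ENNReal.ofReal M)) ^ 2
  have hκ0 : κ ≠ 0 := by simp [κ, hg0, ENNReal.mul_eq_top]
  have hκ : κ ≠ ∞ := by simp [κ, ENNReal.div_eq_top, hNfin, hC, hM0]
  refine ⟨R, hR0, κ.toReal, ENNReal.toReal_pos hκ0 hκ, fun x₀ => ?_⟩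
  have hshift : MeasurePreserving (· - x₀) μ μ := measurePreserving_sub_right μ x₀
  have hN : eLpNorm (fun y => g (y - x₀)) 2 μ = N := eLpNorm_comp_measurePreserving hg.1 hshift
  have htail₀ : ENNReal.ofReal C * eLpNorm (fun y => g (y - x₀)) 2 (μ.restrict (ball x₀ R)ᶜ) ≤
      eLpNorm (fun y => g (y - x₀)) 2 μ / 2 := by
    rw [eLpNorm_comp_sub_restrict_compl_ball hg.1, hN]
    exact hR.le
  have hbound := div_sq_le_measure_inter (f := fun y => g (y - x₀))
    (hg.1.comp_measurePreserving hshift) (fun y => hM _) measurableSet_ball (hN ▸ hNfin)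
    (hobs x₀) htail₀
  rw [hN] at hbound
  rwa [ENNReal.ofReal_toReal hκ]

end Translates

section Thickness

variable {d : ℕ}

def IsThick (ω : Set (EuclideanSpace ℝ (Fin d))) (θ L : ℝ) : Prop :=
  ∀ x : EuclideanSpace ℝ (Fin d),
    ENNReal.ofReal (θ * L ^ d) ≤ volume (ω ∩ {y | ∀ i, y i ∈ Set.Ioo (x i) (x i + L)})

lemma ball_subset_cube (x : EuclideanSpace ℝ (Fin d)) (R : ℝ) :
    ball (x + WithLp.toLp 2 fun _ => R) R ⊆ {y | ∀ i, y i ∈ Set.Ioo (x i) (x i + 2 * R)} := by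
  intro y hy i
  have := (PiLp.norm_apply_le (y - (x + WithLp.toLp 2 fun _ => R)) i).trans_lt
    (mem_ball_iff_norm.mp hy)
  simp only [PiLp.sub_apply, PiLp.add_apply, Real.norm_eq_abs, abs_lt] at this
  constructor <;> linarith

lemma exists_isThick_of_le_measure_ball_inter {ω : Set (EuclideanSpace ℝ (Fin d))} {R κ : ℝ}
    (hR : 0 < R) (hκ : 0 < κ) (h : ∀ x₀, ENNReal.ofReal κ ≤ volume (ball x₀ R ∩ ω)) :
    ∃ θ, 0 < θ ∧ θ ≤ 1 ∧ IsThick ω θ (2 * R) := by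
  refine ⟨min 1 (κ / (2 * R) ^ d), by positivity, min_le_left _ _, fun x => ?_⟩
  calc ENNReal.ofReal (min 1 (κ / (2 * R) ^ d) * (2 * R) ^ d) ≤ ENNReal.ofReal κ := by
        gcongr
        exact (mul_le_mul_of_nonneg_right (min_le_right _ _) (by positivity)).trans
          (div_mul_cancel₀ _ (by positivity)).le
    _ ≤ volume (ball (x + WithLp.toLp 2 fun _ => R) R ∩ ω) := h _
    _ ≤ volume (ω ∩ {y | ∀ i, y i ∈ Set.Ioo (x i) (x i + 2 * R)}) := by
        rw [Set.inter_comm]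
        exact measure_mono (Set.inter_subset_inter_right _ (ball_subset_cube x R))

end Thickness

end

theorem statement14_general (d : ℕ)
    (ω : Set (EuclideanSpace ℝ (Fin d)))
    (lam : ℝ) (hlam : 0 < lam) (C : ℝ) (hC : 0 < C)
    (hobs : ∀ F : EuclideanSpace ℝ (Fin d) → ℂ, MemLp F 2 volume →
      (∀ ξ : EuclideanSpace ℝ (Fin d),
        (¬ ∀ i, ξ i ∈ Set.Icc (-Real.sqrt lam) (Real.sqrt lam)) → F ξ = 0) →
      ∀ f : EuclideanSpace ℝ (Fin d) → ℂ,
      (∀ x, f x = (((2 * π) ^ (-(d:ℝ)) : ℝ) : ℂ) *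
        ∫ ξ : EuclideanSpace ℝ (Fin d),
          Complex.exp (Complex.I * (∑ i, x i * ξ i)) * F ξ) →
      eLpNorm f 2 volume ≤ ENNReal.ofReal C * eLpNorm f 2 (volume.restrict ω)) :
    ∃ θ : ℝ, 0 < θ ∧ θ ≤ 1 ∧ ∃ L > (0:ℝ),
      ∀ x : EuclideanSpace ℝ (Fin d),
        ENNReal.ofReal (θ * L ^ d) ≤
          volume (ω ∩ {y | ∀ i, y i ∈ Set.Ioo (x i) (x i + L)}) := by
  set s := Real.sqrt lam
  have hs : 0 < s := Real.sqrt_pos.mpr hlam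
  have hband (x₀ : EuclideanSpace ℝ (Fin d)) :
      eLpNorm (fun y => cubeKernel d s (y - x₀)) 2 volume ≤
        ENNReal.ofReal C * eLpNorm (fun y => cubeKernel d s (y - x₀)) 2 (volume.restrict ω) :=
    hobs _ (memLp_modulatedCube s x₀) (fun _ => modulatedCube_eq_zero) _
      fun x => (inverseFourier_modulatedCube hs.le x x₀).symm
  obtain ⟨R, hR, κ, hκ, hball⟩ := exists_measure_ball_inter_ge_of_observability
    (memLp_cubeKernel hs.le) (eLpNorm_cubeKernel_ne_zero hs) (by positivity)
    (norm_cubeKernel_le hs.le) hC hband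
  obtain ⟨θ, hθ, hθ₁, hthick⟩ := exists_isThick_of_le_measure_ball_inter hR hκ hball
  exact ⟨θ, hθ, hθ₁, 2 * R, by positivity, hthick⟩

/-- from the proof of Proposition 2.6: if a spectral inequality
`‖f‖_{L²(ℝ^d)} ≤ C ‖f‖_{L²(ω)}` holds for all `f ∈ L²(ℝ^d)` whose Fourier transform is
supported in the cube `[-√λ, √λ]^d`, then `ω` is thick.  A band-limited `f ∈ L²` is exactly
the inverse Fourier transform `f(x) = (2π)^{-d} ∫ e^{i x·ξ} F(ξ) dξ` of an `L²` function `F`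
supported in the cube (such `F` is integrable, so the integral is a genuine Bochner integral);
the convention is `𝓕f(ξ) = ∫ f(x) e^{-i x·ξ} dx`. -/
theorem statement14 (d : ℕ) (hd : 1 ≤ d)
    (ω : Set (EuclideanSpace ℝ (Fin d))) (hω : MeasurableSet ω)
    (lam : ℝ) (hlam : 0 < lam) (C : ℝ) (hC : 0 < C)
    (hobs : ∀ F : EuclideanSpace ℝ (Fin d) → ℂ, MemLp F 2 volume →
      (∀ ξ : EuclideanSpace ℝ (Fin d),
        (¬ ∀ i, ξ i ∈ Set.Icc (-Real.sqrt lam) (Real.sqrt lam)) → F ξ = 0) →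
      ∀ f : EuclideanSpace ℝ (Fin d) → ℂ,
      (∀ x, f x = (((2 * π) ^ (-(d:ℝ)) : ℝ) : ℂ) *
        ∫ ξ : EuclideanSpace ℝ (Fin d),
          Complex.exp (Complex.I * (∑ i, x i * ξ i)) * F ξ) →
      eLpNorm f 2 volume ≤ ENNReal.ofReal C * eLpNorm f 2 (volume.restrict ω)) :
    ∃ θ : ℝ, 0 < θ ∧ θ ≤ 1 ∧ ∃ L > (0:ℝ),
      ∀ x : EuclideanSpace ℝ (Fin d),
        ENNReal.ofReal (θ * L ^ d) ≤
          volume (ω ∩ {y | ∀ i, y i ∈ Set.Ioo (x i) (x i + L)}) :=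
  statement14_general d ω lam hlam C hC hobs
end
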